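/- arXiv:math/0703670 — 3 statements merged into one kernel-verified Lean document; each statement's English description precedes it below -/
import Mathlib

section
/- Let T₀ be an ergodic measure-preserving transformation of a probability space with transfer operator T̂₀ (the adjoint of composition by T₀ on L²). Let g be a nonzero integrable function, f a measurable function with |f| ≤ 1 almost everywhere, and λ ∈ ℂ with |λ| ≥ 1, such that λg = T̂₀(fg) almost everywhere. Then |λ| = 1, |f| = 1 almost everywhere, and λ·(g ∘ T₀) = f·g almost everywhere. -/
/-!
Testing the eigenvalue equation against `v = e^{-i arg g}` gives
`λ ∫ |g| = ∫ f g e^{-i arg (g ∘ T)}`, whose modulus is at most `∫ |g|` since `|f| ≤ 1`. Hence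
`|λ| = 1`, and equality in the triangle inequality forces `f g e^{-i arg (g ∘ T)} = λ |g|` a.e.
Testing next against `1_A e^{-i arg g}` shows that the finite measure `|g| μ` is `T`-invariant,
so by ergodicity `|g|` is a.e. equal to a constant, which is nonzero. The pointwise identity then
gives `|f| = 1` and `λ (g ∘ T) = f g`.
-/

open MeasureTheory Complex
open scoped ComplexOrder

-- Unlike `conj z / ‖z‖`, this has norm one also at `z = 0`.
noncomputable def invPhase (z : ℂ) : ℂ := exp (-z.arg * I)

lemma norm_invPhase (z : ℂ) : ‖invPhase z‖ = 1 := by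
  simpa [invPhase] using norm_exp_ofReal_mul_I (-z.arg)

lemma invPhase_mul_exp_arg (z : ℂ) : invPhase z * exp (z.arg * I) = 1 := by
  rw [invPhase, ← exp_add]; simp

lemma mul_invPhase (z : ℂ) : z * invPhase z = ‖z‖ := by
  nth_rewrite 1 [← norm_mul_exp_arg_mul_I z]
  rw [mul_assoc, mul_comm (exp _), invPhase_mul_exp_arg, mul_one]

lemma eq_mul_of_mul_invPhase_eq {a c w : ℂ} (h : a * invPhase w = c * ‖w‖) : a = c * w := by
  calc a = a * invPhase w * exp (w.arg * I) := by rw [mul_assoc, invPhase_mul_exp_arg, mul_one]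
    _ = c * w := by rw [h, mul_assoc, norm_mul_exp_arg_mul_I]

@[fun_prop]
lemma measurable_invPhase : Measurable invPhase := by
  unfold invPhase; fun_prop

lemma eq_ofReal_of_re_eq_of_norm_le {z : ℂ} {r : ℝ} (hre : z.re = r) (hle : ‖z‖ ≤ r) : z = r := by
  have h0 : 0 ≤ z := re_eq_norm.mp (le_antisymm (hre ▸ hle) (re_le_norm z)).symm
  rw [eq_re_of_ofReal_le h0, hre]

section
variable {α : Type*} [MeasurableSpace α] {μ : Measure α} {T : α → α} {f g : α → ℂ} {lam : ℂ}

theorem ae_eq_mul_of_norm_le_of_integral_eq {F : α → ℂ} {ψ : α → ℝ} {c : ℂ} (hc : ‖c‖ = 1)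
    (hF : Integrable F μ) (hψ : Integrable ψ μ) (hle : ∀ᵐ x ∂μ, ‖F x‖ ≤ ψ x)
    (heq : ∫ x, F x ∂μ = c * ∫ x, ψ x ∂μ) : ∀ᵐ x ∂μ, F x = c * ψ x := by
  have hcc : (starRingEnd ℂ) c * c = 1 := by
    rw [mul_comm, mul_conj, normSq_eq_norm_sq, hc]; simp
  set G : α → ℂ := fun x => (starRingEnd ℂ) c * F x
  have hGle : ∀ᵐ x ∂μ, ‖G x‖ ≤ ψ x := by
    filter_upwards [hle] with x hx
    simpa [G, hc] using hx
  have hGre : Integrable (fun x => (G x).re) μ := (hF.const_mul _).re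
  have hGint : ∫ x, (G x).re ∂μ = ∫ x, ψ x ∂μ := by
    have := integral_re (hF.const_mul ((starRingEnd ℂ) c))
    simp only [RCLike.re_to_complex] at this
    rw [this, integral_const_mul, heq, ← mul_assoc, hcc, one_mul, ofReal_re]
  have hre : ∀ᵐ x ∂μ, (G x).re = ψ x := by
    have hnn : 0 ≤ᵐ[μ] fun x => ψ x - (G x).re := by
      filter_upwards [hGle] with x hx
      exact sub_nonneg.mpr ((re_le_norm _).trans hx)
    have := (integral_eq_zero_iff_of_nonneg_ae hnn (hψ.sub hGre)).mp
      (by rw [integral_sub hψ hGre, hGint, sub_self])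
    filter_upwards [this] with x hx
    exact (sub_eq_zero.mp hx).symm
  filter_upwards [hre, hGle] with x hxre hxle
  rw [← eq_ofReal_of_re_eq_of_norm_le hxre hxle, ← mul_assoc, mul_comm c, hcc, one_mul]

/-- The eigenvalue equation `lam • g = T̂ (f • g)` for the transfer operator `T̂` of `T`, in weak
form: both sides are tested against every measurable `v` with `‖v‖ ≤ 1`. -/
def IsTransferEigen (μ : Measure α) (T : α → α) (f : α → ℂ) (lam : ℂ) (g : α → ℂ) : Prop :=
  ∀ v : α → ℂ, Measurable v → (∀ x, ‖v x‖ ≤ 1) →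
    ∫ x, lam * g x * v x ∂μ = ∫ x, f x * g x * v (T x) ∂μ

lemma integral_norm_pos (hg : Integrable g μ) (hgne : ¬ g =ᵐ[μ] 0) :
    0 < ∫ x, ‖g x‖ ∂μ := by
  refine (integral_nonneg fun x => norm_nonneg _).lt_of_ne fun h => hgne ?_
  filter_upwards [(integral_eq_zero_iff_of_nonneg (fun x => norm_nonneg _) hg.norm).mp h.symm]
    with x hx
  exact norm_eq_zero.mp hx

theorem IsTransferEigen.norm_eq_one (he : IsTransferEigen μ T f lam g) (hg : Integrable g μ)
    (hgm : Measurable g) (hgne : ¬ g =ᵐ[μ] 0) (hf : ∀ᵐ x ∂μ, ‖f x‖ ≤ 1) (hlam : 1 ≤ ‖lam‖) :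
    ‖lam‖ = 1 ∧ ∀ᵐ x ∂μ, f x * g x * invPhase (g (T x)) = lam * ‖g x‖ := by
  have hint : ∫ x, f x * g x * invPhase (g (T x)) ∂μ = lam * ∫ x, ‖g x‖ ∂μ := by
    rw [← he (fun x => invPhase (g x)) (measurable_invPhase.comp hgm) fun x => (norm_invPhase _).le]
    simp only [mul_assoc, mul_invPhase, integral_const_mul, integral_complex_ofReal]
  have hle : ∀ᵐ x ∂μ, ‖f x * g x * invPhase (g (T x))‖ ≤ ‖g x‖ := by
    filter_upwards [hf] with x hx
    rw [norm_mul, norm_mul, norm_invPhase, mul_one]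
    exact mul_le_of_le_one_left (norm_nonneg _) hx
  have hpos := integral_norm_pos hg hgne
  have hlam1 : ‖lam‖ = 1 := by
    refine le_antisymm (le_of_mul_le_mul_right ?_ hpos) hlam
    calc ‖lam‖ * ∫ x, ‖g x‖ ∂μ = ‖∫ x, f x * g x * invPhase (g (T x)) ∂μ‖ := by
          rw [hint, norm_mul, norm_real, Real.norm_of_nonneg hpos.le]
      _ ≤ 1 * ∫ x, ‖g x‖ ∂μ := by rw [one_mul]; exact norm_integral_le_of_norm_le hg.norm hle
  have hne : ∫ x, f x * g x * invPhase (g (T x)) ∂μ ≠ 0 := by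
    rw [hint]
    exact mul_ne_zero (norm_ne_zero_iff.mp (by rw [hlam1]; exact one_ne_zero))
      (ofReal_ne_zero.mpr hpos.ne')
  exact ⟨hlam1, ae_eq_mul_of_norm_le_of_integral_eq hlam1 (Integrable.of_integral_ne_zero hne)
    hg.norm hle hint⟩

theorem IsTransferEigen.setIntegral_norm_preimage (he : IsTransferEigen μ T f lam g)
    (hgm : Measurable g) (hT : Measurable T) (hlam : lam ≠ 0)
    (hE : ∀ᵐ x ∂μ, f x * g x * invPhase (g (T x)) = lam * ‖g x‖) {A : Set α}
    (hA : MeasurableSet A) :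
    ∫ x in T ⁻¹' A, ‖g x‖ ∂μ = ∫ x in A, ‖g x‖ ∂μ := by
  have h := he (A.indicator fun x => invPhase (g x)) ((measurable_invPhase.comp hgm).indicator hA)
    fun x => (norm_indicator_le_norm_self _ _).trans (norm_invPhase _).le
  have hL : ∫ x, lam * g x * A.indicator (fun x => invPhase (g x)) x ∂μ =
      lam * ∫ x in A, (‖g x‖ : ℂ) ∂μ := by
    simp only [mul_assoc, ← Set.indicator_mul_right, mul_invPhase]
    rw [integral_const_mul, integral_indicator hA]
  have hR : ∫ x, f x * g x * A.indicator (fun x => invPhase (g x)) (T x) ∂μ =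
      lam * ∫ x in T ⁻¹' A, (‖g x‖ : ℂ) ∂μ := by
    rw [← integral_const_mul, ← integral_indicator (hT hA)]
    refine integral_congr_ae ?_
    filter_upwards [hE] with x hx
    by_cases hxA : T x ∈ A <;> simp [hxA, hx]
  rw [hL, hR, integral_complex_ofReal, integral_complex_ofReal] at h
  exact_mod_cast (mul_left_cancel₀ hlam h).symm

theorem Ergodic.ae_eq_const_of_setIntegral_preimage_eq [IsFiniteMeasure μ] (hT : Ergodic T μ)
    {ψ : α → ℝ} (hψ : Integrable ψ μ) (hψ0 : 0 ≤ᵐ[μ] ψ)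
    (h : ∀ A, MeasurableSet A → ∫ x in T ⁻¹' A, ψ x ∂μ = ∫ x in A, ψ x ∂μ) :
    ∃ c, ψ =ᵐ[μ] fun _ => c := by
  set ν := μ.withDensity fun x => ENNReal.ofReal (ψ x)
  have : IsFiniteMeasure ν := isFiniteMeasure_withDensity_ofReal hψ.2
  have hν : MeasurePreserving T ν ν := by
    refine ⟨hT.measurable, Measure.ext fun A hA => ?_⟩
    rw [Measure.map_apply hT.measurable hA, withDensity_apply _ hA,
      withDensity_apply _ (hT.measurable hA),
      ← ofReal_integral_eq_lintegral_ofReal hψ.integrableOn (ae_restrict_of_ae hψ0),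
      ← ofReal_integral_eq_lintegral_ofReal hψ.integrableOn (ae_restrict_of_ae hψ0), h A hA]
  obtain ⟨c, hc⟩ := hT.eq_smul_of_absolutelyContinuous hν (withDensity_absolutelyContinuous _ _)
  rw [← withDensity_const, withDensity_eq_iff_of_sigmaFinite hψ.1.aemeasurable.ennreal_ofReal
    aemeasurable_const] at hc
  refine ⟨c.toReal, ?_⟩
  filter_upwards [hc, hψ0] with x hx hx0
  rw [← hx, ENNReal.toReal_ofReal hx0]

theorem IsTransferEigen.of_ergodic [IsFiniteMeasure μ] (he : IsTransferEigen μ T f lam g)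
    (hT : Ergodic T μ) (hg : Integrable g μ) (hgm : Measurable g) (hgne : ¬ g =ᵐ[μ] 0)
    (hf : ∀ᵐ x ∂μ, ‖f x‖ ≤ 1) (hlam : 1 ≤ ‖lam‖) :
    ‖lam‖ = 1 ∧ (∀ᵐ x ∂μ, ‖f x‖ = 1) ∧ ∀ᵐ x ∂μ, lam * g (T x) = f x * g x := by
  obtain ⟨hlam1, hE⟩ := he.norm_eq_one hg hgm hgne hf hlam
  have hlam0 : lam ≠ 0 := norm_ne_zero_iff.mp (by rw [hlam1]; exact one_ne_zero)
  obtain ⟨c, hc⟩ := hT.ae_eq_const_of_setIntegral_preimage_eq hg.norm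
    (ae_of_all _ fun x => norm_nonneg _)
    fun A hA => he.setIntegral_norm_preimage hgm hT.measurable hlam0 hE hA
  have hc0 : c ≠ 0 := by
    rintro rfl
    exact hgne (hc.mono fun x hx => norm_eq_zero.mp hx)
  have hcT : ∀ᵐ x ∂μ, ‖g (T x)‖ = c := hT.quasiMeasurePreserving.ae hc
  refine ⟨hlam1, ?_, ?_⟩
  · filter_upwards [hE, hc] with x hx hgx
    have := congrArg norm hx
    rw [norm_mul, norm_mul, norm_mul, norm_invPhase, norm_real, Real.norm_of_nonneg (norm_nonneg _),
      hlam1, hgx] at this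
    exact mul_right_cancel₀ hc0 (by linarith)
  · filter_upwards [hE, hc, hcT] with x hx hgx hgTx
    rw [hgx, ← hgTx] at hx
    exact (eq_mul_of_mul_invPhase_eq hx).symm

end

theorem stmt_0_general {α : Type*} [MeasurableSpace α] (μ : Measure α) [IsProbabilityMeasure μ]
    (T₀ : α → α) (hErg : Ergodic T₀ μ)
    (g f h : α → ℂ) (hg : Integrable g μ) (hgne : ¬ g =ᵐ[μ] 0)
    (hfb : ∀ᵐ x ∂μ, ‖f x‖ ≤ 1)
    (hadj : ∀ v : α → ℂ, Measurable v → (∀ x, ‖v x‖ ≤ 1) →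
      ∫ x, h x * v x ∂μ = ∫ x, f x * g x * v (T₀ x) ∂μ)
    (lam : ℂ) (hlam : 1 ≤ ‖lam‖)
    (heq : ∀ᵐ x ∂μ, lam * g x = h x) :
    ‖lam‖ = 1 ∧ (∀ᵐ x ∂μ, ‖f x‖ = 1) ∧
      (∀ᵐ x ∂μ, lam * g (T₀ x) = f x * g x) := by
  obtain ⟨g', hg'm, hgg'⟩ := hg.aemeasurable
  have hgT : ∀ᵐ x ∂μ, g (T₀ x) = g' (T₀ x) := hErg.quasiMeasurePreserving.ae hgg'
  have he : IsTransferEigen μ T₀ f lam g' := fun v hv hv1 => by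
    calc ∫ x, lam * g' x * v x ∂μ = ∫ x, h x * v x ∂μ :=
          integral_congr_ae (by filter_upwards [heq, hgg'] with x hx hx'; rw [← hx, hx'])
      _ = ∫ x, f x * g x * v (T₀ x) ∂μ := hadj v hv hv1
      _ = ∫ x, f x * g' x * v (T₀ x) ∂μ :=
          integral_congr_ae (by filter_upwards [hgg'] with x hx; rw [hx])
  obtain ⟨hlam1, hf1, hfg⟩ := he.of_ergodic hErg (hg.congr hgg') hg'm
    (fun h0 => hgne (hgg'.trans h0)) hfb hlam
  refine ⟨hlam1, hf1, ?_⟩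
  filter_upwards [hfg, hgg', hgT] with x hx hx' hxT
  rw [hx', hxT, hx]

/-- Lemma on eigenfunctions of transfer operators: if `T₀` is ergodic measure preserving,
`g` is a nonzero integrable function, `|f| ≤ 1`, `|λ| ≥ 1` and `λ g = T̂₀(f g)`
(where the transfer operator is characterized by `∫ T̂₀ u · v = ∫ u · (v ∘ T₀)` for
bounded measurable `v`), then `|λ| = 1`, `|f| = 1` a.e., and `λ · (g ∘ T₀) = f g` a.e. -/
theorem stmt_0 {α : Type*} [MeasurableSpace α] (μ : Measure α) [IsProbabilityMeasure μ]
    (T₀ : α → α) (hT : MeasurePreserving T₀ μ μ) (hErg : Ergodic T₀ μ)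
    (g f h : α → ℂ) (hg : Integrable g μ) (hgne : ¬ g =ᵐ[μ] 0)
    (hfm : AEMeasurable f μ) (hfb : ∀ᵐ x ∂μ, ‖f x‖ ≤ 1)
    (hh : Integrable h μ)
    (hadj : ∀ v : α → ℂ, Measurable v → (∀ x, ‖v x‖ ≤ 1) →
      ∫ x, h x * v x ∂μ = ∫ x, f x * g x * v (T₀ x) ∂μ)
    (lam : ℂ) (hlam : 1 ≤ ‖lam‖)
    (heq : ∀ᵐ x ∂μ, lam * g x = h x) :
    ‖lam‖ = 1 ∧ (∀ᵐ x ∂μ, ‖f x‖ = 1) ∧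
      (∀ᵐ x ∂μ, lam * g (T₀ x) = f x * g x) :=
  stmt_0_general μ T₀ hErg g f h hg hgne hfb hadj lam hlam heq
end

section
/- With T the Farey map (T(x) = x/(1-x) for x < 1/2, T(x) = 2 - 1/x for x ≥ 1/2), for every n ≥ 1 the set of nonzero elements of the n-th Farey set satisfies Fₙ* = { hₘₙ ∘ ⋯ ∘ hₘ₁ (1) : each Mᵢ ∈ {A, B} }, where h_A(x) = x/(1+x) and h_B(x) = 1/(2-x). Equivalently, Fₙ* is the set of n-th preimages of 1 under T lying in (0,1]. -/
/-- The Farey map (with the left branch chosen at the point `1/2`, where the two branch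
formulas of the disjoint-union model overlap): `T(x) = x/(1-x)` on `[0,1/2]`,
`T(x) = 2 - 1/x` on `(1/2,1]`. -/
noncomputable def fareyT (x : ℝ) : ℝ := if x ≤ 1/2 then x / (1 - x) else 2 - 1/x

/-- `h_A(x) = x/(1+x)`, inverse branch of the Farey map. -/
noncomputable def hA (x : ℝ) : ℝ := x / (1 + x)

/-- `h_B(x) = 1/(2-x)`, inverse branch of the Farey map. -/
noncomputable def hB (x : ℝ) : ℝ := 1 / (2 - x)

/-- Insert the median between each pair of consecutive elements. -/
def fareyStep : List ℚ → List ℚ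
  | x :: y :: rest => x :: mkRat (x.num + y.num) (x.den + y.den) :: fareyStep (y :: rest)
  | l => l

/-- The Farey sets `Fₙ`. -/
def fareyList : ℕ → List ℚ
  | 0 => [0, 1]
  | n + 1 => fareyStep (fareyList n)

/-- The set `{h_{Mₙ} ∘ ⋯ ∘ h_{M₁}(1) : Mᵢ ∈ {A,B}}` of points obtained from `1` by applying
`n` inverse branches. -/
noncomputable def branchSet : ℕ → Set ℝ
  | 0 => {1}
  | n + 1 => hA '' branchSet n ∪ hB '' branchSet n

/-!
In lowest terms `h_A (p/q) = p/(p+q)` and `h_B (p/q) = q/(2q-p)`: both branches act linearly on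
the pair `(p, q)` and preserve coprimality, hence commute with taking mediants. As `Fₙ` runs from
`0` to `1` and `h_A 1 = h_B 0 = 1/2`, the list `h_A(Fₙ)` followed by `h_B(Fₙ)` (its first entry
dropped) is glued at `1/2`, and inserting medians into it yields the same list built from `Fₙ₊₁`.
By induction `Fₙ₊₁ = h_A(Fₙ) ++ h_B(Fₙ)` up to the shared point, so `Fₙ₊₁* = h_A(Fₙ*) ∪ h_B(Fₙ*)`.
On `(0,1]`, `h_A` and `h_B` invert `T` on `(0,1/2]` and `(1/2,1]`, which gives the second equality.
-/

open Set

section Branches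

variable {K : Type*}

def branchA [DivisionRing K] (x : K) : K := x / (1 + x)

def branchB [DivisionRing K] (x : K) : K := 1 / (2 - x)

theorem hA_eq_branchA : hA = branchA := rfl

theorem hB_eq_branchB : hB = branchB := rfl

section Field

variable [Field K]

theorem branchA_div (a : K) {b : K} (hb : b ≠ 0) : branchA (a / b) = a / (a + b) := by
  have h : 1 + a / b = (a + b) / b := by rw [add_div, div_self hb, add_comm]
  rw [branchA, h, div_div_div_cancel_right₀ hb]

theorem branchB_div (a : K) {b : K} (hb : b ≠ 0) : branchB (a / b) = b / (2 * b - a) := by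
  have h : 2 - a / b = (2 * b - a) / b := by rw [sub_div, mul_div_cancel_right₀ _ hb]
  rw [branchB, h, one_div_div]

@[simp] theorem Rat.cast_branchA [CharZero K] (q : ℚ) :
    ((branchA q : ℚ) : K) = branchA (q : K) := by
  simp [branchA]

@[simp] theorem Rat.cast_branchB [CharZero K] (q : ℚ) :
    ((branchB q : ℚ) : K) = branchB (q : K) := by
  simp [branchB]

end Field

variable [Field K] [LinearOrder K] [IsStrictOrderedRing K]

theorem mapsTo_branchA : MapsTo branchA (Ioc (0 : K) 1) (Ioc 0 1) := by
  rintro x ⟨hx0, hx1⟩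
  have : 0 < 1 + x := by linarith
  exact ⟨div_pos hx0 this, (div_le_one this).2 (by linarith)⟩

theorem mapsTo_branchB : MapsTo branchB (Ioc (0 : K) 1) (Ioc 0 1) := by
  rintro x ⟨hx0, hx1⟩
  have : 0 < 2 - x := by linarith
  exact ⟨one_div_pos.2 this, (div_le_one this).2 (by linarith)⟩

end Branches

def mediant (q r : ℚ) : ℚ := mkRat (q.num + r.num) (q.den + r.den)

theorem mediant_eq_div (q r : ℚ) : mediant q r = (q.num + r.num) / (q.den + r.den) := by
  rw [mediant, Rat.mkRat_eq_divInt, Rat.divInt_eq_div]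
  push_cast
  rfl

theorem Rat.num_den_div_of_isCoprime {a b : ℤ} (hb : 0 < b) (hab : IsCoprime a b) :
    ((a / b : ℚ).num : ℚ) = a ∧ ((a / b : ℚ).den : ℚ) = b := by
  have hab' : Nat.Coprime a.natAbs b.natAbs := Int.isCoprime_iff_gcd_eq_one.1 hab
  refine ⟨by rw [Rat.num_div_eq_of_coprime hb hab'], ?_⟩
  rw [← Int.cast_natCast, Rat.den_div_eq_of_coprime hb hab']

theorem mediant_div_div {a b c d : ℤ} (hb : 0 < b) (hd : 0 < d) (hab : IsCoprime a b)
    (hcd : IsCoprime c d) : mediant (a / b) (c / d) = (a + c) / (b + d) := by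
  obtain ⟨ha', hb'⟩ := Rat.num_den_div_of_isCoprime hb hab
  obtain ⟨hc', hd'⟩ := Rat.num_den_div_of_isCoprime hd hcd
  rw [mediant_eq_div, ha', hb', hc', hd']

theorem Rat.num_add_den_pos {q : ℚ} (hq : -1 < q) : 0 < q.num + q.den := by
  have hden : (0 : ℚ) < q.den := mod_cast q.den_pos
  rw [← Rat.num_div_den q, lt_div_iff₀ hden] at hq
  exact_mod_cast (by linarith : (0 : ℚ) < q.num + q.den)

theorem Rat.two_mul_den_sub_num_pos {q : ℚ} (hq : q < 2) : 0 < 2 * q.den - q.num := by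
  have hden : (0 : ℚ) < q.den := mod_cast q.den_pos
  rw [← Rat.num_div_den q, div_lt_iff₀ hden] at hq
  exact_mod_cast (by linarith : (0 : ℚ) < 2 * q.den - q.num)

theorem branchA_eq_num_div (q : ℚ) : branchA q = (q.num : ℤ) / ((q.num + q.den : ℤ) : ℚ) := by
  push_cast
  rw [← branchA_div _ (mod_cast q.den_ne_zero), Rat.num_div_den]

theorem branchB_eq_den_div (q : ℚ) :
    branchB q = ((q.den : ℤ) : ℚ) / ((2 * q.den - q.num : ℤ) : ℚ) := by
  push_cast
  rw [← branchB_div _ (mod_cast q.den_ne_zero), Rat.num_div_den]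

theorem branchA_mediant {q r : ℚ} (hq : -1 < q) (hr : -1 < r) :
    branchA (mediant q r) = mediant (branchA q) (branchA r) := by
  rw [branchA_eq_num_div q, branchA_eq_num_div r, mediant_div_div (Rat.num_add_den_pos hq)
    (Rat.num_add_den_pos hr), mediant_eq_div, branchA_div _ (by positivity)]
  · push_cast; ring
  · simpa using (IsCoprime.mul_add_left_right_iff (z := 1)).2 q.isCoprime_num_den
  · simpa using (IsCoprime.mul_add_left_right_iff (z := 1)).2 r.isCoprime_num_den

theorem branchB_mediant {q r : ℚ} (hq : q < 2) (hr : r < 2) :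
    branchB (mediant q r) = mediant (branchB q) (branchB r) := by
  rw [branchB_eq_den_div q, branchB_eq_den_div r, mediant_div_div (Rat.two_mul_den_sub_num_pos hq)
    (Rat.two_mul_den_sub_num_pos hr), mediant_eq_div, branchB_div _ (by positivity)]
  · push_cast; ring
  · simpa [mul_comm] using (IsCoprime.mul_sub_left_right_iff (z := 2)).2 q.isCoprime_num_den.symm
  · simpa [mul_comm] using (IsCoprime.mul_sub_left_right_iff (z := 2)).2 r.isCoprime_num_den.symm

theorem fareyStep_cons_cons (x y : ℚ) (l : List ℚ) :
    fareyStep (x :: y :: l) = x :: mediant x y :: fareyStep (y :: l) := rfl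

theorem head?_fareyStep : ∀ l : List ℚ, (fareyStep l).head? = l.head?
  | [] | [_] | _ :: _ :: _ => rfl

theorem fareyStep_cons (x : ℚ) (l : List ℚ) : ∃ t, fareyStep (x :: l) = x :: t :=
  List.head?_eq_some_iff.1 (head?_fareyStep (x :: l))

theorem getLast?_fareyStep : ∀ l : List ℚ, (fareyStep l).getLast? = l.getLast?
  | [] | [_] => rfl
  | x :: y :: l => by
    obtain ⟨t, ht⟩ := fareyStep_cons y l
    rw [fareyStep_cons_cons, ht, List.getLast?_cons_cons, List.getLast?_cons_cons, ← ht,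
      getLast?_fareyStep (y :: l), List.getLast?_cons_cons]

theorem fareyStep_map (f : ℚ → ℚ) :
    ∀ l : List ℚ, (∀ x ∈ l, ∀ y ∈ l, f (mediant x y) = mediant (f x) (f y)) →
      fareyStep (l.map f) = (fareyStep l).map f
  | [], _ | [_], _ => rfl
  | x :: y :: l, h => by
    have ih := fareyStep_map f (y :: l) fun a ha b hb => h a (by simp [ha]) b (by simp [hb])
    simp only [List.map_cons, fareyStep_cons_cons] at ih ⊢
    rw [ih, h x (by simp) y (by simp)]

theorem fareyStep_append_cons : ∀ (l₁ : List ℚ) (x : ℚ) (l₂ : List ℚ),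
    fareyStep (l₁ ++ x :: l₂) = fareyStep (l₁ ++ [x]) ++ (fareyStep (x :: l₂)).tail
  | [], x, l₂ => by
    obtain ⟨t, ht⟩ := fareyStep_cons x l₂
    simp [ht, fareyStep]
  | [a], x, l₂ => by
    obtain ⟨t, ht⟩ := fareyStep_cons x l₂
    simp [fareyStep_cons_cons, ht, fareyStep]
  | a :: b :: l₁, x, l₂ => by
    have ih := fareyStep_append_cons (b :: l₁) x l₂
    simp only [List.cons_append, fareyStep_cons_cons] at ih ⊢
    rw [ih]

theorem fareyList_eq_cons (n : ℕ) : ∃ t, fareyList n = 0 :: t := by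
  refine List.head?_eq_some_iff.1 ?_
  induction n with
  | zero => rfl
  | succ n ih => rw [fareyList, head?_fareyStep, ih]

theorem fareyList_eq_append (n : ℕ) : ∃ s, fareyList n = s ++ [1] := by
  refine List.getLast?_eq_some_iff.1 ?_
  induction n with
  | zero => rfl
  | succ n ih => rw [fareyList, getLast?_fareyStep, ih]

theorem branchA_zero : branchA (0 : ℚ) = 0 := by simp [branchA]

theorem branchA_one_eq_branchB_zero : branchA (1 : ℚ) = branchB 0 := by norm_num [branchA, branchB]

theorem tail_map_branchA_append (t : List ℚ) :
    ((0 :: t).map branchA ++ ((0 :: t).map branchB).tail).tail =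
      t.map branchA ++ t.map branchB := by
  simp [branchA_zero]

theorem fareyStep_map_branchA_append {l : List ℚ} (h0 : ∃ t, l = 0 :: t) (h1 : ∃ s, l = s ++ [1])
    (hl : ∀ q ∈ l, q ∈ Icc 0 1) :
    fareyStep (l.map branchA ++ (l.map branchB).tail) =
      (fareyStep l).map branchA ++ ((fareyStep l).map branchB).tail := by
  obtain ⟨t, ht⟩ := h0
  obtain ⟨s, hs⟩ := h1
  have hA : l.map branchA = s.map branchA ++ [branchA 1] := by simp [hs]
  have hB : l.map branchB = branchA 1 :: t.map branchB := by simp [ht, branchA_one_eq_branchB_zero]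
  have hAmed : ∀ x ∈ l, ∀ y ∈ l, branchA (mediant x y) = mediant (branchA x) (branchA y) :=
    fun x hx y hy => branchA_mediant (by linarith [(hl x hx).1]) (by linarith [(hl y hy).1])
  have hBmed : ∀ x ∈ l, ∀ y ∈ l, branchB (mediant x y) = mediant (branchB x) (branchB y) :=
    fun x hx y hy => branchB_mediant (by linarith [(hl x hx).2]) (by linarith [(hl y hy).2])
  rw [hB, List.tail_cons, hA, List.append_assoc, List.singleton_append, fareyStep_append_cons, ← hA,
    ← hB, fareyStep_map _ l hAmed, fareyStep_map _ l hBmed]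

theorem fareyList_succ_and_tail_mem_Ioc (n : ℕ) :
    fareyList (n + 1) = (fareyList n).map branchA ++ ((fareyList n).map branchB).tail ∧
      ∀ q ∈ (fareyList n).tail, q ∈ Ioc 0 1 := by
  induction n with
  | zero =>
    refine ⟨?_, by simp [fareyList]⟩
    norm_num [fareyList, fareyStep, mediant_eq_div, branchA, branchB]
  | succ n ih =>
    obtain ⟨hsucc, hIoc⟩ := ih
    obtain ⟨t, ht⟩ := fareyList_eq_cons n
    have hIcc : ∀ q ∈ fareyList n, q ∈ Icc 0 1 := by
      rw [ht] at hIoc ⊢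
      rintro q (_ | ⟨_, hq⟩)
      · simp
      · exact Ioc_subset_Icc_self (hIoc q hq)
    refine ⟨?_, ?_⟩
    · conv_lhs => rw [fareyList, hsucc]
      exact fareyStep_map_branchA_append (fareyList_eq_cons n) (fareyList_eq_append n) hIcc
    · rw [ht] at hIoc
      rw [hsucc, ht, tail_map_branchA_append]
      simp only [List.mem_append, List.mem_map]
      rintro q (⟨p, hp, rfl⟩ | ⟨p, hp, rfl⟩)
      · exact mapsTo_branchA (hIoc p hp)
      · exact mapsTo_branchB (hIoc p hp)

theorem tail_fareyList_succ (n : ℕ) :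
    (fareyList (n + 1)).tail =
      (fareyList n).tail.map branchA ++ (fareyList n).tail.map branchB := by
  obtain ⟨t, ht⟩ := fareyList_eq_cons n
  rw [(fareyList_succ_and_tail_mem_Ioc n).1, ht, tail_map_branchA_append, List.tail_cons]

theorem mem_fareyList_and_ne_zero_iff {n : ℕ} {q : ℚ} :
    q ∈ fareyList n ∧ q ≠ 0 ↔ q ∈ (fareyList n).tail := by
  obtain ⟨t, ht⟩ := fareyList_eq_cons n
  have hIoc := (fareyList_succ_and_tail_mem_Ioc n).2
  rw [ht] at hIoc ⊢
  refine ⟨fun ⟨hq, hq0⟩ => (List.mem_cons.1 hq).resolve_left hq0, fun hq => ⟨?_, (hIoc q hq).1.ne'⟩⟩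
  exact List.mem_cons_of_mem 0 hq

theorem image_cast_tail_fareyList (n : ℕ) :
    ((↑) : ℚ → ℝ) '' {q | q ∈ (fareyList n).tail} = branchSet n := by
  induction n with
  | zero => simp [fareyList, branchSet]
  | succ n ih =>
    have hsplit : {q | q ∈ (fareyList (n + 1)).tail} =
        branchA '' {q | q ∈ (fareyList n).tail} ∪ branchB '' {q | q ∈ (fareyList n).tail} := by
      ext q
      simp only [tail_fareyList_succ, List.mem_append, List.mem_map, mem_ofPred_eq, mem_union,
        mem_image]
    rw [branchSet, ← ih, hsplit, image_union, image_comm Rat.cast_branchA,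
      image_comm Rat.cast_branchB, hA_eq_branchA, hB_eq_branchB]

theorem fareyT_hA {y : ℝ} (hy0 : 0 ≤ y) (hy1 : y ≤ 1) : fareyT (hA y) = y := by
  have hd : 0 < 1 + y := by linarith
  have hle : hA y ≤ 1 / 2 := by rw [hA, div_le_iff₀ hd]; linarith
  rw [fareyT, if_pos hle, hA]
  field_simp
  ring

theorem fareyT_hB {y : ℝ} (hy0 : 0 < y) (hy2 : y < 2) : fareyT (hB y) = y := by
  have hgt : ¬ hB y ≤ 1 / 2 := by rw [hB, not_le, lt_div_iff₀ (by linarith)]; linarith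
  rw [fareyT, if_neg hgt, hB, one_div_one_div]
  ring

theorem hA_fareyT {x : ℝ} (hx : x ≤ 1 / 2) : hA (fareyT x) = x := by
  have hd : 0 < 1 - x := by linarith
  rw [fareyT, if_pos hx, hA]
  field_simp
  ring

theorem hB_fareyT {x : ℝ} (hx : ¬ x ≤ 1 / 2) : hB (fareyT x) = x := by
  rw [fareyT, if_neg hx, hB, sub_sub_cancel, one_div_one_div]

theorem mapsTo_fareyT : MapsTo fareyT (Ioc 0 1) (Ioc 0 1) := by
  rintro x ⟨hx0, hx1⟩
  by_cases hx : x ≤ 1 / 2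
  · have hd : 0 < 1 - x := by linarith
    rw [fareyT, if_pos hx]
    exact ⟨div_pos hx0 hd, (div_le_one hd).2 (by linarith)⟩
  · rw [fareyT, if_neg hx]
    have : 1 ≤ 1 / x := by rw [le_div_iff₀ hx0]; linarith
    have : 1 / x < 2 := by rw [div_lt_iff₀ hx0]; linarith
    constructor <;> linarith

theorem Ioc_inter_preimage_fareyT {S : Set ℝ} (hS : S ⊆ Ioc 0 1) :
    Ioc 0 1 ∩ fareyT ⁻¹' S = hA '' S ∪ hB '' S := by
  ext x
  constructor
  · rintro ⟨-, hTx⟩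
    by_cases h : x ≤ 1 / 2
    · exact Or.inl ⟨fareyT x, hTx, hA_fareyT h⟩
    · exact Or.inr ⟨fareyT x, hTx, hB_fareyT h⟩
  · rintro (⟨y, hy, rfl⟩ | ⟨y, hy, rfl⟩) <;> obtain ⟨hy0, hy1⟩ := hS hy
    · exact ⟨mapsTo_branchA (hS hy), by rwa [mem_preimage, fareyT_hA hy0.le hy1]⟩
    · exact ⟨mapsTo_branchB (hS hy), by rwa [mem_preimage, fareyT_hB hy0 (by linarith)]⟩

theorem branchSet_eq_Ioc_inter_preimage (n : ℕ) : branchSet n = Ioc 0 1 ∩ fareyT^[n] ⁻¹' {1} := by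
  induction n with
  | zero => simp [branchSet]
  | succ n ih =>
    rw [branchSet, ← Ioc_inter_preimage_fareyT (ih ▸ inter_subset_left), ih, preimage_inter,
      ← inter_assoc, inter_eq_left.2 mapsTo_fareyT.subset_preimage, Function.iterate_succ,
      preimage_comp]

theorem stmt_8_general (n : ℕ) :
    {x : ℝ | ∃ q ∈ fareyList n, q ≠ 0 ∧ (q : ℝ) = x} = branchSet n ∧
    branchSet n = {x ∈ Set.Ioc (0:ℝ) 1 | fareyT^[n] x = 1} := by
  refine ⟨?_, branchSet_eq_Ioc_inter_preimage n⟩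
  rw [← image_cast_tail_fareyList]
  ext x
  simp only [mem_ofPred_eq, mem_image, ← mem_fareyList_and_ne_zero_iff, and_assoc]

/-- For `n ≥ 1`, the set `Fₙ*` of nonzero elements of the `n`-th Farey set equals the set of
points `h_{Mₙ} ∘ ⋯ ∘ h_{M₁}(1)` with `Mᵢ ∈ {A,B}`; equivalently, it is the set of `n`-th
preimages of `1` under the Farey map `T` lying in `(0,1]`. -/
theorem stmt_8 (n : ℕ) (hn : 1 ≤ n) :
    {x : ℝ | ∃ q ∈ fareyList n, q ≠ 0 ∧ (q : ℝ) = x} = branchSet n ∧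
    branchSet n = {x ∈ Set.Ioc (0:ℝ) 1 | fareyT^[n] x = 1} :=
  stmt_8_general n
end

section
/- Let T be a measure-preserving transformation of a probability space (Ω, μ) and ψ ∈ L²(μ) with ∫ψ dμ = 0. Suppose the correlations cₖ = ∫ ψ · (ψ ∘ T^k) dμ satisfy ∑_{k≥1} k·|cₖ| < ∞, and set σ² = ∫ψ² dμ + 2∑_{k≥1} cₖ. Then ‖∑_{i=0}^{n-1} ψ ∘ T^i‖²_{L²} = n σ² + O(1) as n → ∞; in particular σ² ≥ 0. -/
/-!
By stationarity, `∫ ψ∘T^i · ψ∘T^j = c_{j-i}`, so `‖Sₙψ‖² = n c₀ + 2 ∑_{k<n} (n - k) c_k`.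
Subtracting `n σ² = n c₀ + 2n ∑_{k≥1} c_k` leaves `-2 (∑_{k<n} k c_k + n ∑_{k≥n} c_k)`, which is
bounded by `2 ∑ k |c_k|` since `n ≤ k` on the tail. As `‖Sₙψ‖² ≥ 0`, a negative `σ²` would
make `‖Sₙψ‖² - n σ²` unbounded.
-/

open MeasureTheory Finset

section WeightedTails

variable {d : ℕ → ℝ}

lemma summable_of_summable_succ_mul_abs (hd : Summable fun k : ℕ => ((k : ℝ) + 1) * |d k|) :
    Summable d :=
  (Summable.of_nonneg_of_le (fun k => abs_nonneg (d k))
    (fun k => le_mul_of_one_le_left (abs_nonneg _) (by linarith [k.cast_nonneg (α := ℝ)]))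
    hd).of_abs

lemma sum_range_sub_succ_mul_sub_mul_tsum (hd : Summable d) (n : ℕ) :
    ∑ j ∈ range n, ((n : ℝ) - (j + 1)) * d j - n * ∑' k, d k
      = -(∑ j ∈ range n, ((j : ℝ) + 1) * d j + n * ∑' k : ℕ, d (k + n)) := by
  rw [← hd.sum_add_tsum_nat_add n]
  simp only [sub_mul, sum_sub_distrib, ← mul_sum]
  ring

lemma abs_sum_range_succ_mul_add_mul_tsum_le (hd : Summable fun k : ℕ => ((k : ℝ) + 1) * |d k|)
    (n : ℕ) :
    |∑ j ∈ range n, ((j : ℝ) + 1) * d j + n * ∑' k : ℕ, d (k + n)|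
      ≤ ∑' k : ℕ, ((k : ℝ) + 1) * |d k| := by
  have habs : Summable fun k => |d (k + n)| :=
    (summable_nat_add_iff n).2 (summable_of_summable_succ_mul_abs hd).abs
  have htail : Summable fun k => ((↑(k + n) : ℝ) + 1) * |d (k + n)| :=
    (summable_nat_add_iff n).2 hd
  calc _ ≤ ∑ j ∈ range n, ((j : ℝ) + 1) * |d j| + n * ∑' k : ℕ, |d (k + n)| := by
        refine (abs_add_le _ _).trans (add_le_add ?_ ?_)
        · refine (abs_sum_le_sum_abs _ _).trans_eq (sum_congr rfl fun j _ => ?_)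
          rw [abs_mul, abs_of_pos (by positivity)]
        · rw [abs_mul, Nat.abs_cast]
          gcongr
          exact norm_tsum_le_tsum_norm (f := fun k => d (k + n)) habs
    _ ≤ ∑ j ∈ range n, ((j : ℝ) + 1) * |d j|
          + ∑' k : ℕ, ((↑(k + n) : ℝ) + 1) * |d (k + n)| := by
        rw [← tsum_mul_left]
        refine add_le_add le_rfl ((habs.mul_left _).tsum_le_tsum (fun k => ?_) htail)
        gcongr
        push_cast
        linarith [k.cast_nonneg (α := ℝ)]
    _ = _ := hd.sum_add_tsum_nat_add n

end WeightedTails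

lemma nonneg_of_abs_sub_nat_mul_le {a : ℕ → ℝ} {s C : ℝ} (ha : ∀ n, 0 ≤ a n)
    (h : ∀ n : ℕ, |a n - n * s| ≤ C) : 0 ≤ s := by
  by_contra! hs
  obtain ⟨n, hn⟩ := exists_nat_gt (C / -s)
  have := (div_lt_iff₀ (neg_pos.2 hs)).1 hn
  linarith [ha n, (abs_le.1 (h n)).2]

lemma MeasureTheory.MeasurePreserving.integral_comp_of_aestronglyMeasurable {α β E : Type*}
    [MeasurableSpace α] [MeasurableSpace β] [NormedAddCommGroup E] [NormedSpace ℝ E]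
    {μ : Measure α} {ν : Measure β} {T : α → β} (hT : MeasurePreserving T μ ν) {g : β → E}
    (hg : AEStronglyMeasurable g ν) :
    ∫ x, g (T x) ∂μ = ∫ y, g y ∂ν := by
  rw [← hT.map_eq] at hg ⊢
  exact (integral_map hT.aemeasurable hg).symm

section Correlations

variable {Ω : Type*} [MeasurableSpace Ω] {μ : Measure Ω} {T : Ω → Ω} {ψ : Ω → ℝ}

variable (μ T ψ) in
noncomputable def correlation (k : ℕ) : ℝ := ∫ x, ψ x * ψ (T^[k] x) ∂μ

lemma correlation_zero : correlation μ T ψ 0 = ∫ x, ψ x ^ 2 ∂μ := by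
  simp only [correlation, Function.iterate_zero_apply, sq]

variable (hT : MeasurePreserving T μ μ) (hψ : MemLp ψ 2 μ)
include hT hψ

lemma integral_comp_iterate_mul_comp_iterate_add (i k : ℕ) :
    ∫ x, ψ (T^[i] x) * ψ (T^[i + k] x) ∂μ = correlation μ T ψ k := by
  have hg : AEStronglyMeasurable (fun y => ψ y * ψ (T^[k] y)) μ :=
    hψ.1.mul (hψ.1.comp_measurePreserving (hT.iterate k))
  simp_rw [add_comm i k, Function.iterate_add_apply]
  exact (hT.iterate i).integral_comp_of_aestronglyMeasurable hg

lemma integral_birkhoffSum_mul_comp_iterate (n : ℕ) :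
    ∫ x, birkhoffSum T ψ n x * ψ (T^[n] x) ∂μ = ∑ j ∈ range n, correlation μ T ψ (j + 1) := by
  have hmem : ∀ i, MemLp (fun x => ψ (T^[i] x)) 2 μ :=
    fun i => hψ.comp_measurePreserving (hT.iterate i)
  have hint : ∀ i, Integrable (fun x => ψ (T^[i] x) * ψ (T^[n] x)) μ :=
    fun i => (hmem i).integrable_mul (hmem n)
  simp only [birkhoffSum, sum_mul]
  rw [integral_finsetSum _ fun i _ => hint i, ← sum_range_reflect]
  refine sum_congr rfl fun j hj => ?_
  have hjn : n - 1 - j + (j + 1) = n := by have := mem_range.1 hj; omega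
  rw [← integral_comp_iterate_mul_comp_iterate_add hT hψ (n - 1 - j), hjn]

lemma integral_sq_birkhoffSum_succ (n : ℕ) :
    ∫ x, birkhoffSum T ψ (n + 1) x ^ 2 ∂μ
      = ∫ x, birkhoffSum T ψ n x ^ 2 ∂μ + correlation μ T ψ 0
        + 2 * ∑ j ∈ range n, correlation μ T ψ (j + 1) := by
  have hmem : ∀ i, MemLp (fun x => ψ (T^[i] x)) 2 μ :=
    fun i => hψ.comp_measurePreserving (hT.iterate i)
  have hS : MemLp (birkhoffSum T ψ n) 2 μ := memLp_finsetSum _ fun i _ => hmem i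
  have h1 : Integrable (fun x => birkhoffSum T ψ n x ^ 2) μ := hS.integrable_sq
  have h2 : Integrable (fun x => 2 * (birkhoffSum T ψ n x * ψ (T^[n] x))) μ :=
    (hS.integrable_mul (hmem n)).const_mul 2
  have h3 : Integrable (fun x => ψ (T^[n] x) ^ 2) μ := (hmem n).integrable_sq
  have hexpand : ∀ x, birkhoffSum T ψ (n + 1) x ^ 2 = birkhoffSum T ψ n x ^ 2
      + 2 * (birkhoffSum T ψ n x * ψ (T^[n] x)) + ψ (T^[n] x) ^ 2 := fun x => by
    rw [birkhoffSum_succ]; ring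
  have h12 : Integrable (fun x => birkhoffSum T ψ n x ^ 2
      + 2 * (birkhoffSum T ψ n x * ψ (T^[n] x))) μ := h1.add h2
  simp_rw [hexpand]
  rw [integral_add h12 h3, integral_add h1 h2, integral_const_mul,
    integral_birkhoffSum_mul_comp_iterate hT hψ,
    ← integral_comp_iterate_mul_comp_iterate_add hT hψ n 0]
  simp only [add_zero, sq]
  ring

lemma integral_sq_birkhoffSum (n : ℕ) :
    ∫ x, birkhoffSum T ψ n x ^ 2 ∂μ
      = n * correlation μ T ψ 0
        + 2 * ∑ j ∈ range n, ((n : ℝ) - (j + 1)) * correlation μ T ψ (j + 1) := by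
  induction n with
  | zero => simp [birkhoffSum_zero]
  | succ n ih =>
    have hweights : ∑ j ∈ range n, (((n + 1 : ℕ) : ℝ) - (j + 1)) * correlation μ T ψ (j + 1)
        = ∑ j ∈ range n, ((n : ℝ) - (j + 1)) * correlation μ T ψ (j + 1)
          + ∑ j ∈ range n, correlation μ T ψ (j + 1) := by
      rw [← sum_add_distrib]
      refine sum_congr rfl fun j _ => ?_
      push_cast
      ring
    rw [integral_sq_birkhoffSum_succ hT hψ, ih, sum_range_succ, hweights]
    push_cast
    ring

end Correlations

theorem stmt_10_general {Ω : Type*} [MeasurableSpace Ω] (μ : Measure Ω)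
    (T : Ω → Ω) (hT : MeasurePreserving T μ μ) (ψ : Ω → ℝ)
    (hψ : MemLp ψ 2 μ)
    (c : ℕ → ℝ) (hc : ∀ k, c k = ∫ x, ψ x * ψ (T^[k] x) ∂μ)
    (hsum : Summable (fun k : ℕ => ((k + 1 : ℕ) : ℝ) * |c (k + 1)|))
    (σ2 : ℝ) (hσ : σ2 = (∫ x, ψ x ^ 2 ∂μ) + 2 * ∑' k : ℕ, c (k + 1)) :
    (∃ C : ℝ, ∀ n : ℕ,
      |(∫ x, (∑ i ∈ Finset.range n, ψ (T^[i] x)) ^ 2 ∂μ) - n * σ2| ≤ C) ∧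
    0 ≤ σ2 := by
  obtain rfl : c = correlation μ T ψ := funext hc
  have hd : Summable fun k : ℕ => ((k : ℝ) + 1) * |correlation μ T ψ (k + 1)| := by
    exact_mod_cast hsum
  have hbound : ∀ n : ℕ, |(∫ x, birkhoffSum T ψ n x ^ 2 ∂μ) - n * σ2|
      ≤ 2 * ∑' k : ℕ, ((k : ℝ) + 1) * |correlation μ T ψ (k + 1)| := by
    intro n
    have hdiff : (∫ x, birkhoffSum T ψ n x ^ 2 ∂μ) - n * σ2
        = 2 * (∑ j ∈ range n, ((n : ℝ) - (j + 1)) * correlation μ T ψ (j + 1)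
          - n * ∑' k, correlation μ T ψ (k + 1)) := by
      rw [integral_sq_birkhoffSum hT hψ, hσ, ← correlation_zero]
      ring
    rw [hdiff, sum_range_sub_succ_mul_sub_mul_tsum (summable_of_summable_succ_mul_abs hd), abs_mul,
      abs_neg, abs_two]
    gcongr
    exact abs_sum_range_succ_mul_add_mul_tsum_le hd n
  exact ⟨⟨_, hbound⟩,
    nonneg_of_abs_sub_nat_mul_le (fun n => integral_nonneg fun x => sq_nonneg _) hbound⟩

/-- For a measure-preserving `T` on a probability space and a zero-mean `ψ ∈ L²` whose
correlations `cₖ = ∫ ψ · ψ∘T^k` satisfy `∑ k |cₖ| < ∞`, with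
`σ² = ∫ψ² + 2∑_{k≥1} cₖ`, the `L²` norm squared of the Birkhoff sums satisfies
`‖Sₙψ‖² = n σ² + O(1)`; in particular `σ² ≥ 0`. -/
theorem stmt_10 {Ω : Type*} [MeasurableSpace Ω] (μ : Measure Ω) [IsProbabilityMeasure μ]
    (T : Ω → Ω) (hT : MeasurePreserving T μ μ) (ψ : Ω → ℝ)
    (hψmeas : Measurable ψ) (hψ : MemLp ψ 2 μ) (hmean : ∫ x, ψ x ∂μ = 0)
    (c : ℕ → ℝ) (hc : ∀ k, c k = ∫ x, ψ x * ψ (T^[k] x) ∂μ)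
    (hsum : Summable (fun k : ℕ => ((k + 1 : ℕ) : ℝ) * |c (k + 1)|))
    (σ2 : ℝ) (hσ : σ2 = (∫ x, ψ x ^ 2 ∂μ) + 2 * ∑' k : ℕ, c (k + 1)) :
    (∃ C : ℝ, ∀ n : ℕ,
      |(∫ x, (∑ i ∈ Finset.range n, ψ (T^[i] x)) ^ 2 ∂μ) - n * σ2| ≤ C) ∧
    0 ≤ σ2 :=
  stmt_10_general μ T hT ψ hψ c hc hsum σ2 hσ
end
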